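/- arXiv:2412.01489 — 2 statements merged into one kernel-verified Lean document; each statement's English description precedes it below -/
import Mathlib

section
/- Let G = (V,(c_{xy})) be a finite connected weighted graph, α positive site weights, and ω nonnegative killing rates. For every k ≥ 2, every t ≥ 0, and every η ∈ Ξ_k, the survival probability of the k-particle purely absorbing SIP is dominated by the worst-case single-particle survival probability: (e^{t L_{G,α,ω,k}} 1)(η) ≤ max_{x∈V} (e^{t L_{G,α,ω,1}} 1)(δ_x), where 1 denotes the constant function equal to 1 on the respective configuration space and the exponentials are matrix exponentials on the finite-dimensional spaces ℝ^{Ξ_k} and ℝ^{Ξ_1}. -/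
open scoped BigOperators Classical

noncomputable section

/-- The configuration space of `k` particles on the finite site set `V`. -/
def Config (V : Type*) [Fintype V] (k : ℕ) : Type _ :=
  {η : V → ℕ // ∑ x, η x = k}

namespace Config

variable {V : Type*} [Fintype V] [DecidableEq V] {k : ℕ}

lemma apply_le (η : Config V k) (x : V) : η.1 x ≤ k := by
  have h := Finset.single_le_sum (f := η.1) (fun i _ => Nat.zero_le _) (Finset.mem_univ x)
  simpa [η.2] using h

instance instFintype : Fintype (Config V k) :=
  Fintype.ofInjective
    (fun η : Config V k => (fun x => (⟨η.1 x, Nat.lt_succ_of_le (η.apply_le x)⟩ : Fin (k+1))))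
    (fun a b hab => Subtype.ext (funext fun x => congrArg Fin.val (congrFun hab x)))

/-- The configuration `η - δ_x + δ_y` (move a particle from `x` to `y`);
by convention it is `η` itself when `η` has no particle at `x`. -/
def move (η : Config V k) (x y : V) : Config V k :=
  if h : η.1 x = 0 then η else
    ⟨fun z => η.1 z - (if z = x then 1 else 0) + (if z = y then 1 else 0), by
      have hle : ∀ z : V, (if z = x then 1 else 0) ≤ η.1 z := fun z => by
        by_cases hz : z = x
        · simpa [hz] using Nat.one_le_iff_ne_zero.2 h
        · simp [hz]
      have cast_term : ∀ z : V,
          ((η.1 z - (if z = x then 1 else 0) + (if z = y then 1 else 0) : ℕ) : ℤ)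
            = (η.1 z : ℤ) - (if z = x then 1 else 0) + (if z = y then 1 else 0) := by
        intro z
        rw [Nat.cast_add, Nat.cast_sub (hle z)]
        by_cases hz : z = x <;> by_cases hz' : z = y <;> simp [hz, hz']
      have key : ((∑ z, (η.1 z - (if z = x then 1 else 0) + (if z = y then 1 else 0)) : ℕ) : ℤ)
          = (k : ℤ) := by
        rw [Nat.cast_sum]
        rw [Finset.sum_congr rfl (fun z _ => cast_term z)]
        rw [Finset.sum_add_distrib, Finset.sum_sub_distrib]
        have h1 : (∑ z, (η.1 z : ℤ)) = (k : ℤ) := by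
          rw [← Nat.cast_sum, η.2]
        rw [h1]
        simp
      exact_mod_cast key⟩

/-- The configuration `η + δ_x`. -/
def addOne (η : Config V k) (x : V) : Config V (k + 1) :=
  ⟨fun z => η.1 z + (if z = x then 1 else 0), by
    rw [Finset.sum_add_distrib, η.2]
    simp⟩

end Config

section Defs

variable {V : Type*} [Fintype V] [DecidableEq V]

/-- The configuration with `k` particles stacked at `x`. -/
def stackConfig (V : Type*) [Fintype V] [DecidableEq V] (k : ℕ) (x : V) : Config V k :=
  ⟨fun z => if z = x then k else 0, by simp⟩

/-- Normalization constant `Z_{α,k}`. -/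
def sipZ (α : V → ℝ) (k : ℕ) : ℝ :=
  Real.Gamma ((∑ x, α x) + k) / (Real.Gamma (∑ x, α x) * (Nat.factorial k))

/-- The reversible (Dirichlet-multinomial) measure `μ_{α,k}` of SIP. -/
def sipMeasure (α : V → ℝ) {k : ℕ} (η : Config V k) : ℝ :=
  (sipZ α k)⁻¹ * ∏ x, Real.Gamma (α x + η.1 x) / (Real.Gamma (α x) * (Nat.factorial (η.1 x)))

/-- The Dirichlet form of `SIP_k(G, α)`. -/
def dirichletForm (c : V → V → ℝ) (α : V → ℝ) {k : ℕ} (f : Config V k → ℝ) : ℝ :=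
  (1 / 2) * ∑ η : Config V k, ∑ x, ∑ y,
    sipMeasure α η * (c x y * η.1 x * (α y + η.1 y) * (f (η.move x y) - f η) ^ 2)

/-- Mean of `f` under `μ_{α,k}`. -/
def sipMean (α : V → ℝ) {k : ℕ} (f : Config V k → ℝ) : ℝ :=
  ∑ η : Config V k, sipMeasure α η * f η

/-- Variance of `f` under `μ_{α,k}`. -/
def sipVar (α : V → ℝ) {k : ℕ} (f : Config V k → ℝ) : ℝ :=
  ∑ η : Config V k, sipMeasure α η * (f η - sipMean α f) ^ 2

/-- Squared `L²(μ_{α,k})`-norm of `f`. -/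
def sipNormSq (α : V → ℝ) {k : ℕ} (f : Config V k → ℝ) : ℝ :=
  ∑ η : Config V k, sipMeasure α η * (f η) ^ 2

/-- The spectral gap `gap_k(G,α)` of the `k`-particle SIP. -/
def sipGap (c : V → V → ℝ) (α : V → ℝ) (k : ℕ) : ℝ :=
  sInf {r : ℝ | ∃ f : Config V k → ℝ, (∃ η ζ : Config V k, f η ≠ f ζ) ∧
    r = dirichletForm c α f / sipVar α f}

/-- `gap_SIP(G,α) = inf_{k ≥ 2} gap_k(G,α)`. -/
def sipGapInf (c : V → V → ℝ) (α : V → ℝ) : ℝ :=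
  sInf {r : ℝ | ∃ k : ℕ, 2 ≤ k ∧ r = sipGap c α k}

/-- The simple graph underlying a symmetric family of conductances. -/
def graphOf (c : V → V → ℝ) : SimpleGraph V where
  Adj x y := x ≠ y ∧ (0 < c x y ∨ 0 < c y x)
  symm := ⟨fun x y h => ⟨h.1.symm, h.2.symm⟩⟩
  loopless := ⟨fun x h => h.1 rfl⟩

/-- The diameter of the weighted graph: maximal graph distance between two sites. -/
def graphDiam (c : V → V → ℝ) : ℕ :=
  Finset.univ.sup (fun p : V × V => (graphOf c).dist p.1 p.2)

/-- The minimal positive conductance. -/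
def cMin (c : V → V → ℝ) : ℝ :=
  sInf {r : ℝ | 0 < r ∧ ∃ x y, c x y = r}

/-- Minimal site weight. -/
def alphaMin (α : V → ℝ) : ℝ := sInf (Set.range α)

/-- Maximal site weight. -/
def alphaMax (α : V → ℝ) : ℝ := sSup (Set.range α)

/-- Conductances of the complete graph on `V`. -/
def completeCond (V : Type*) [DecidableEq V] : V → V → ℝ :=
  fun x y => if x = y then 0 else 1

/-- The generator matrix of `SIP_k(G,α)` acting on `ℝ^{Ξ_k}` by `mulVec`. -/
def sipMatrix (c : V → V → ℝ) (α : V → ℝ) (k : ℕ) : Matrix (Config V k) (Config V k) ℝ :=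
  fun η ζ => ∑ x, ∑ y, c x y * η.1 x * (α y + η.1 y) *
    ((if η.move x y = ζ then 1 else 0) - (if ζ = η then 1 else 0))

/-- The generator matrix `A_{β,k}` of `k` independent random walks. -/
def rwPartMatrix (c : V → V → ℝ) (β : V → ℝ) (k : ℕ) : Matrix (Config V k) (Config V k) ℝ :=
  fun η ζ => ∑ x, ∑ y, c x y * η.1 x * β y *
    ((if η.move x y = ζ then 1 else 0) - (if ζ = η then 1 else 0))

/-- The generator matrix `B_k` of the pure interaction (fast) dynamics. -/
def clumpMatrix (c : V → V → ℝ) (k : ℕ) : Matrix (Config V k) (Config V k) ℝ :=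
  fun η ζ => ∑ x, ∑ y, c x y * η.1 x * η.1 y *
    ((if η.move x y = ζ then 1 else 0) - (if ζ = η then 1 else 0))

/-- The generator matrix of the purely absorbing (killed) SIP. -/
def killedMatrix (c : V → V → ℝ) (α ω : V → ℝ) (k : ℕ) :
    Matrix (Config V k) (Config V k) ℝ :=
  fun η ζ => sipMatrix c α k η ζ - (if ζ = η then ∑ x, ω x * η.1 x else 0)

/-- `η ∈ Ω_k`: absorbing configurations for the fast dynamics. -/
def inOmega (c : V → V → ℝ) {k : ℕ} (η : Config V k) : Prop :=
  ∀ x y, c x y * η.1 x * η.1 y = 0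

/-- The number of occupied sites (stacks) of a configuration. -/
def numStacks {k : ℕ} (η : Config V k) : ℕ :=
  (Finset.univ.filter fun x => 0 < η.1 x).card

/-- Jump rates of `k` independent random walks: `r^A(η,ζ)`. -/
def rateA (c : V → V → ℝ) (β : V → ℝ) {k : ℕ} (η ζ : Config V k) : ℝ :=
  ∑ x, ∑ y, if η.1 x ≠ 0 ∧ η.move x y = ζ then c x y * η.1 x * β y else 0

/-- Metastable jump rates `r^M(η,ξ) = Σ_ζ r^A(η,ζ) h_ξ(ζ)`, given absorption
probabilities `h`. -/
def rateM (c : V → V → ℝ) (β : V → ℝ) {k : ℕ} (h : Config V k → Config V k → ℝ)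
    (η ξ : Config V k) : ℝ :=
  ∑ ζ, rateA c β η ζ * h ξ ζ

/-- The metastable generator on `Ω_k`, given absorption probabilities `h`. -/
def metaGen (c : V → V → ℝ) (β : V → ℝ) {k : ℕ} (h : Config V k → Config V k → ℝ)
    (g : Config V k → ℝ) (η : Config V k) : ℝ :=
  ∑ ξ, if inOmega c ξ ∧ ξ ≠ η then rateM c β h η ξ * (g ξ - g η) else 0

/-- The (restricted) annihilation operator `â_{k+1} g (η) = Σ_x η_x g(η - δ_x)`. -/
def annihilate {k : ℕ} (g : Config V k → ℝ) (η : Config V (k + 1)) : ℝ :=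
  ∑ x, ∑ ξ : Config V k, if ξ.addOne x = η then (η.1 x : ℝ) * g ξ else 0

/-- The SIP generator as an operator on functions. -/
def sipGen (c : V → V → ℝ) (α : V → ℝ) {k : ℕ} (f : Config V k → ℝ) (η : Config V k) : ℝ :=
  ∑ x, ∑ y, c x y * η.1 x * (α y + η.1 y) * (f (η.move x y) - f η)

/-- The purely absorbing (killed) SIP generator. -/
def killedGen (c : V → V → ℝ) (α ω : V → ℝ) {k : ℕ} (f : Config V k → ℝ)
    (η : Config V k) : ℝ :=
  sipGen c α f η - f η * ∑ x, ω x * η.1 x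

/-- Spectral gap of the killed `k`-particle SIP (Rayleigh quotient infimum). -/
def killedGap (c : V → V → ℝ) (α ω : V → ℝ) (k : ℕ) : ℝ :=
  sInf {r : ℝ | ∃ f : Config V k → ℝ, f ≠ 0 ∧
    r = (∑ η, sipMeasure α η * f η * (-(killedGen c α ω f η))) / sipNormSq α f}

/-- `λ_{k,k}(β)`: the variational bottom eigenvalue of `k` independent walks killed
upon two particles becoming adjacent. -/
def lamLevel (c : V → V → ℝ) (β : V → ℝ) (k : ℕ) : ℝ :=
  sInf {r : ℝ | ∃ f : Config V k → ℝ, f ≠ 0 ∧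
    (∀ η : Config V k, ¬(inOmega c η ∧ numStacks η = k) → f η = 0) ∧
    r = dirichletForm c β f / sipNormSq β f}


/-- The symmetrizing measure `ς_{β,k,m}` on stack configurations. -/
def stackMeasure (β : V → ℝ) {k : ℕ} (η : Config V k) : ℝ :=
  ∏ x, if 0 < η.1 x then β x / η.1 x else 1

/-- The lookdown generator of the SIP with killing, on labeled configurations. -/
def lookdownGen (c : V → V → ℝ) (α ω : V → ℝ) (k : ℕ) (φ : (Fin k → V) → ℝ)
    (v : Fin k → V) : ℝ :=
  (∑ i : Fin k, ∑ x, ∑ y, c x y * (if x = v i then 1 else 0) *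
      (α y + 2 * ∑ j : Fin k, (if (j : ℕ) < (i : ℕ) ∧ v j = y then 1 else 0)) *
      (φ (Function.update v i y) - φ v))
    - φ v * ∑ i, ω (v i)

/-- The unlabeling map `Φ_k` from labeled to unlabeled configurations. -/
def unlabel {k : ℕ} (v : Fin k → V) : Config V k :=
  ⟨fun z => (Finset.univ.filter fun i => v i = z).card, by
    have h := Finset.card_eq_sum_card_fiberwise
      (f := v) (s := Finset.univ) (t := Finset.univ) (fun i _ => Finset.mem_univ _)
    simpa using h.symm⟩

/-- The symmetrization operator `S_k`. -/
def symmetrize (k : ℕ) (φ : (Fin k → V) → ℝ) (v : Fin k → V) : ℝ :=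
  (1 / (Nat.factorial k : ℝ)) * ∑ σ : Equiv.Perm (Fin k), φ (fun i => v (σ i))

/-- `η + δ_x` on the full configuration space `ℕ^V`. -/
def addFn (η : V → ℕ) (x : V) : V → ℕ := fun z => η z + (if z = x then 1 else 0)

/-- `η - δ_x` on the full configuration space (truncated subtraction). -/
def remFn (η : V → ℕ) (x : V) : V → ℕ := fun z => η z - (if z = x then 1 else 0)

/-- `η - δ_x + δ_y` on the full configuration space; `η` itself when `η x = 0`. -/
def moveFn (η : V → ℕ) (x y : V) : V → ℕ :=
  if η x = 0 then η else fun z => η z - (if z = x then 1 else 0) + (if z = y then 1 else 0)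

/-- The generator of the non-conservative (open) SIP. -/
def openGen (c : V → V → ℝ) (α ω θ : V → ℝ) (f : (V → ℕ) → ℝ) (η : V → ℕ) : ℝ :=
  (∑ x, ∑ y, c x y * η x * (α y + η y) * (f (moveFn η x y) - f η))
  + ∑ x, ω x * ((η x : ℝ) * (1 + θ x) * (f (remFn η x) - f η)
      + θ x * (α x + η x) * (f (addFn η x) - f η))

/-- One-site Meixner duality function at density `0`:
`d_{a,0}(m,n) = (n!/(n-m)!) (Γ(a)/Γ(a+m)) 1{m ≤ n}`. -/
def dualD0 (a : ℝ) (m n : ℕ) : ℝ :=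
  if m ≤ n then (Nat.descFactorial n m : ℝ) * (Real.Gamma a / Real.Gamma (a + m)) else 0

/-- One-site Meixner duality function at density `ϱ`. -/
def dualD (a ϱ : ℝ) (m n : ℕ) : ℝ :=
  ∑ l ∈ Finset.range (m + 1), (Nat.choose m l : ℝ) * dualD0 a l n * (-ϱ) ^ (m - l)

/-- The orthogonal duality function `D_{α,ϱ}(ξ,η)`. -/
def dualityFn (α : V → ℝ) (ϱ : ℝ) {k : ℕ} (ξ : Config V k) (η : V → ℕ) : ℝ :=
  ∏ x, dualD (α x) ϱ (ξ.1 x) (η x)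

/-- The polynomial `F_{α,ϱ}^ψ` associated to `ψ : Ξ_k → ℝ`. -/
def liftF (α : V → ℝ) (ϱ : ℝ) {k : ℕ} (ψ : Config V k → ℝ) (η : V → ℕ) : ℝ :=
  ∑ ξ : Config V k, sipMeasure α ξ * ψ ξ * dualityFn α ϱ ξ η

end Defs


end

open scoped BigOperators Classical
open NormedSpace Finset

noncomputable section
namespace SIPaux
set_option linter.unusedSectionVars false
set_option linter.unusedVariables false

variable {V : Type*} [Fintype V] [DecidableEq V] {k : ℕ}

lemma unlabel_apply (v : Fin k → V) (z : V) :
    (unlabel v).1 z = (Finset.univ.filter fun i => v i = z).card := rfl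

lemma unlabel_pos (v : Fin k → V) (i : Fin k) : 1 ≤ (unlabel v).1 (v i) := by
  rw [unlabel_apply]
  exact Finset.card_pos.mpr ⟨i, by simp⟩

/-- sum over labels equals weighted sum over sites -/
lemma sum_label (v : Fin k → V) (f : V → ℝ) :
    ∑ i, f (v i) = ∑ x, ((unlabel v).1 x : ℝ) * f x := by
  rw [← Finset.sum_fiberwise_of_maps_to (g := fun i : Fin k => v i) (t := Finset.univ)
    (fun i _ => Finset.mem_univ (v i)) (fun i => f (v i))]
  refine Finset.sum_congr rfl fun x _ => ?_
  have h : ∀ i ∈ Finset.univ.filter fun i => v i = x, f (v i) = f x := fun i hi => by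
    rw [(Finset.mem_filter.mp hi).2]
  rw [Finset.sum_congr rfl h, Finset.sum_const, nsmul_eq_mul, unlabel_apply]

lemma move_apply {η : Config V k} {x : V} (hx : η.1 x ≠ 0) (y z : V) :
    (η.move x y).1 z = η.1 z - (if z = x then 1 else 0) + (if z = y then 1 else 0) := by
  simp only [Config.move]
  exact congrArg (fun η' : Config V k => η'.1 z) (dif_neg hx)

lemma move_self {η : Config V k} {x y : V} (h : η.1 x = 0 ∨ x = y) : η.move x y = η := by
  rcases h with h | h
  · simp only [Config.move]
    exact dif_pos h
  · subst h
    rcases eq_or_ne (η.1 x) 0 with h0 | h0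
    · simp only [Config.move]
      exact dif_pos h0
    · apply Subtype.ext; funext z
      rw [move_apply h0]
      have hb : (if z = x then 1 else 0) ≤ η.1 z := by
        split_ifs with hh
        · subst hh; omega
        · omega
      split_ifs at hb ⊢ <;> omega

lemma move_ne {η : Config V k} {x y : V} (hx : η.1 x ≠ 0) (hxy : x ≠ y) :
    η.move x y ≠ η := by
  intro h
  have h1 : (η.move x y).1 x = η.1 x := by rw [h]
  rw [move_apply hx] at h1
  split_ifs at h1 <;> first | omega | tauto

lemma move_move {η : Config V k} {x y : V} (hx : η.1 x ≠ 0) (hxy : x ≠ y) :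
    (η.move x y).move y x = η := by
  have hy : (η.move x y).1 y ≠ 0 := by
    rw [move_apply hx]
    split_ifs <;> first | omega | tauto
  apply Subtype.ext; funext z
  rw [move_apply hy, move_apply hx]
  have hb : (if z = x then 1 else 0) ≤ η.1 z := by
    split_ifs with hh
    · subst hh; omega
    · omega
  split_ifs at hb ⊢ <;> first | omega | tauto | simp_all

/-- uniqueness of the move decomposition -/
lemma move_unique {η : Config V k} {x y x' y' : V} (hx : η.1 x ≠ 0) (hx' : η.1 x' ≠ 0)
    (hxy : x ≠ y) (hxy' : x' ≠ y') (h : η.move x y = η.move x' y') : x = x' ∧ y = y' := by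
  have hz : ∀ z, η.1 z - (if z = x then 1 else 0) + (if z = y then 1 else 0)
      = η.1 z - (if z = x' then 1 else 0) + (if z = y' then 1 else 0) := by
    intro z
    have hq : (η.move x y).1 z = (η.move x' y').1 z := by rw [h]
    rwa [move_apply hx, move_apply hx'] at hq
  have hnx : 1 ≤ η.1 x := by omega
  have hnx' : 1 ≤ η.1 x' := by omega
  have hxx' : x = x' := by
    by_contra e1
    have h1 := hz x
    split_ifs at h1 <;> first | omega | tauto
  subst hxx'
  refine ⟨rfl, ?_⟩
  by_contra e2
  have h2 := hz y
  split_ifs at h2 <;> first | omega | tauto | (exact hxy (by simp_all))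


lemma update_unlabel_apply (v : Fin k → V) (i : Fin k) (y z : V) :
    (unlabel (Function.update v i y)).1 z + (if v i = z then 1 else 0)
      = (unlabel v).1 z + (if y = z then 1 else 0) := by
  show (Finset.univ.filter fun j => Function.update v i y j = z).card + _
      = (Finset.univ.filter fun j => v j = z).card + _
  rw [Finset.card_filter, Finset.card_filter,
    ← Finset.add_sum_erase _ _ (Finset.mem_univ i),
    ← Finset.add_sum_erase _ (fun j => if v j = z then 1 else 0) (Finset.mem_univ i)]
  have hs : ∀ j ∈ Finset.univ.erase i, (if Function.update v i y j = z then 1 else 0)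
      = (if v j = z then (1:ℕ) else 0) := by
    intro j hj
    rw [Function.update_of_ne (Finset.mem_erase.mp hj).1]
  rw [Finset.sum_congr rfl hs, Function.update_self]
  omega

lemma unlabel_update {v : Fin k → V} {i : Fin k} {y : V} (h : y ≠ v i) :
    unlabel (Function.update v i y) = (unlabel v).move (v i) y := by
  have hvi : (unlabel v).1 (v i) ≠ 0 := by
    have := unlabel_pos v i
    omega
  apply Subtype.ext; funext z
  rw [move_apply hvi]
  have hb := unlabel_pos v i
  have key := update_unlabel_apply v i y z
  by_cases h1 : z = v i <;> by_cases h2 : z = y <;>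
    simp only [h1, h2, if_pos rfl, if_true, if_false, if_neg, eq_comm] at key ⊢ <;>
    split_ifs at key ⊢ <;> simp_all <;> omega

/-- every configuration has a labeling -/
lemma exists_label (η : Config V k) : ∃ v : Fin k → V, unlabel v = η := by
  have hcard : Fintype.card (Σ x : V, Fin (η.1 x)) = Fintype.card (Fin k) := by
    simp [Fintype.card_sigma, η.2]
  let e : (Σ x : V, Fin (η.1 x)) ≃ Fin k := Fintype.equivOfCardEq hcard
  refine ⟨fun i => (e.symm i).1, ?_⟩
  apply Subtype.ext; funext z
  show (Finset.univ.filter fun i => (e.symm i).1 = z).card = η.1 z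
  rw [show (Finset.univ.filter fun i => (e.symm i).1 = z).card
      = ((Finset.univ : Finset (Σ x : V, Fin (η.1 x))).filter fun s => s.1 = z).card from
    Finset.card_bij' (fun i _ => e.symm i) (fun s _ => e s)
      (by intro a ha; simpa using (Finset.mem_filter.mp ha).2)
      (by intro s hs; simp; simpa using (Finset.mem_filter.mp hs).2)
      (by intro a ha; simp) (by intro s hs; simp)]
  rw [Finset.card_filter, ← Finset.univ_sigma_univ, Finset.sum_sigma]
  simp [apply_ite Finset.card, Finset.sum_ite_eq']

def Nlab (η : Config V k) : ℕ := (Finset.univ.filter fun v : Fin k → V => unlabel v = η).card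

lemma Nlab_pos (η : Config V k) : 0 < Nlab η := by
  obtain ⟨v, hv⟩ := exists_label η
  exact Finset.card_pos.mpr ⟨v, by simp [hv]⟩

/-- counting pairs (v, i) with `unlabel v = η` and `v i = x`. -/
lemma card_pairs (η : Config V k) (x : V) :
    ((Finset.univ : Finset ((Fin k → V) × Fin k)).filter
        fun p => unlabel p.1 = η ∧ p.1 p.2 = x).card = Nlab η * η.1 x := by
  rw [Finset.card_filter, ← Finset.univ_product_univ, Finset.sum_product]
  have h : ∀ v : Fin k → V, (∑ i, if unlabel v = η ∧ v i = x then (1:ℕ) else 0)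
      = if unlabel v = η then η.1 x else 0 := by
    intro v
    by_cases hv : unlabel v = η
    · simp only [hv, true_and, if_true]
      rw [← hv, unlabel_apply, Finset.card_filter]
    · simp [hv]
  dsimp only
  trans ∑ v : Fin k → V, if unlabel v = η then η.1 x else 0
  · convert Finset.sum_congr rfl fun v _ => h v
  rw [← Finset.sum_filter, Finset.sum_const,
    smul_eq_mul]
  rfl

/-- the key counting ratio -/
lemma Nlab_ratio {η : Config V k} {x y : V} (hxy : x ≠ y) (hx : η.1 x ≠ 0) :
    Nlab (η.move x y) * ((η.move x y).1 y) = Nlab η * η.1 x := by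
  rw [← card_pairs (η.move x y) y, ← card_pairs η x]
  refine Finset.card_bij' (fun p _ => (Function.update p.1 p.2 x, p.2))
    (fun p _ => (Function.update p.1 p.2 y, p.2)) ?_ ?_ ?_ ?_
  · rintro ⟨w, i⟩ hp
    simp only [Finset.mem_filter] at hp
    obtain ⟨hw, hwi⟩ := hp.2
    simp only [Finset.mem_filter]
    refine ⟨Finset.mem_univ _, ?_, by simp⟩
    have hxwi : x ≠ w i := by rw [hwi]; exact hxy
    show unlabel (Function.update w i x) = η
    rw [unlabel_update hxwi, hw, hwi]
    exact move_move hx hxy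
  · rintro ⟨v, i⟩ hp
    simp only [Finset.mem_filter] at hp
    obtain ⟨hv, hvi⟩ := hp.2
    simp only [Finset.mem_filter]
    refine ⟨Finset.mem_univ _, ?_, by simp⟩
    have hyvi : y ≠ v i := by rw [hvi]; exact hxy.symm
    show unlabel (Function.update v i y) = η.move x y
    rw [unlabel_update hyvi, hv, hvi]
  · rintro ⟨w, i⟩ hp
    simp only [Finset.mem_filter] at hp
    obtain ⟨hw, hwi⟩ := hp.2
    simp only [Function.update_idem, Prod.mk.injEq]
    exact ⟨by rw [← hwi, Function.update_eq_self], trivial⟩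
  · rintro ⟨v, i⟩ hp
    simp only [Finset.mem_filter] at hp
    obtain ⟨hv, hvi⟩ := hp.2
    simp only [Function.update_idem, Prod.mk.injEq]
    exact ⟨by rw [← hvi, Function.update_eq_self], trivial⟩


/-- ordered pair counting within a finset -/
lemma swap_sum (F : Finset (Fin k)) :
    (∑ i ∈ F, (F.filter fun j => j < i).card)
      = ∑ i ∈ F, (F.filter fun j => i < j).card := by
  have h1 : ∀ i ∈ F, (F.filter fun j => j < i).card
      = ∑ j ∈ F, if j < i then 1 else 0 := fun i _ => Finset.card_filter _ _
  have h2 : ∀ i ∈ F, (F.filter fun j => i < j).card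
      = ∑ j ∈ F, if i < j then 1 else 0 := fun i _ => Finset.card_filter _ _
  rw [Finset.sum_congr rfl h1, Finset.sum_congr rfl h2, Finset.sum_comm]

lemma filter_split (F : Finset (Fin k)) (i : Fin k) (hi : i ∈ F) :
    (F.filter fun j => j < i).card + (F.filter fun j => i < j).card + 1 = F.card := by
  have h1 := Finset.card_filter_add_card_filter_not (s := F) (p := fun j => j < i)
  have h2 : F.filter (fun j => ¬ j < i) = insert i (F.filter fun j => i < j) := by
    ext a
    simp only [Finset.mem_filter, Finset.mem_insert, not_lt]
    constructor
    · rintro ⟨ha, hle⟩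
      rcases lt_or_eq_of_le hle with h | h
      · exact Or.inr ⟨ha, h⟩
      · exact Or.inl h.symm
    · rintro (rfl | ⟨ha, h⟩)
      · exact ⟨hi, le_refl _⟩
      · exact ⟨ha, le_of_lt h⟩
  have h3 : i ∉ F.filter fun j => i < j := by simp
  rw [h2, Finset.card_insert_of_notMem h3] at h1
  omega

lemma sum_pairs_card (F : Finset (Fin k)) :
    2 * (∑ i ∈ F, (F.filter fun j => j < i).card) + F.card = F.card * F.card := by
  have hsw := swap_sum F
  have hsum : (∑ i ∈ F, (F.filter fun j => j < i).card)
      + ((∑ i ∈ F, (F.filter fun j => i < j).card) + F.card) = F.card * F.card := by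
    have hterm : ∀ i ∈ F, (F.filter fun j => j < i).card +
        ((F.filter fun j => i < j).card + 1) = F.card := by
      intro i hi; have := filter_split F i hi; omega
    calc (∑ i ∈ F, (F.filter fun j => j < i).card)
        + ((∑ i ∈ F, (F.filter fun j => i < j).card) + F.card)
        = ∑ i ∈ F, ((F.filter fun j => j < i).card + ((F.filter fun j => i < j).card + 1)) := by
          rw [Finset.sum_add_distrib, Finset.sum_add_distrib, Finset.sum_const, smul_eq_mul,
            mul_one]
      _ = ∑ _i ∈ F, F.card := Finset.sum_congr rfl hterm
      _ = F.card * F.card := by rw [Finset.sum_const, smul_eq_mul]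
  omega


variable {c : V → V → ℝ} {α ω : V → ℝ}

/-- number of lower-indexed particles at `y` -/
def cnt (v : Fin k → V) (i : Fin k) (y : V) : ℕ :=
  (Finset.univ.filter fun j => j < i ∧ v j = y).card

/-- lookdown jump rate -/
def lrate (c : V → V → ℝ) (α : V → ℝ) (v : Fin k → V) (i : Fin k) (y : V) : ℝ :=
  c (v i) y * (α y + 2 * cnt v i y)

/-- the labeled (lookdown) generator matrix with killing `κ` -/
def labM (c : V → V → ℝ) (α : V → ℝ) (κ : (Fin k → V) → ℝ) :
    Matrix (Fin k → V) (Fin k → V) ℝ :=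
  fun v w => (∑ i, ∑ y, lrate c α v i y *
    ((if Function.update v i y = w then 1 else 0) - (if w = v then 1 else 0)))
    - (if w = v then κ v else 0)

lemma cnt_update (v : Fin k → V) (i : Fin k) (x y : V) :
    cnt (Function.update v i x) i y = cnt v i y := by
  unfold cnt
  congr 1
  apply Finset.filter_congr
  intro j _
  by_cases hj : j < i
  · simp [hj, Function.update_of_ne (ne_of_lt hj)]
  · simp [hj]

lemma cnt_cast (v : Fin k → V) (i : Fin k) (y : V) :
    (cnt v i y : ℝ) = ∑ j, if j < i ∧ v j = y then (1:ℝ) else 0 := by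
  rw [cnt, Finset.card_filter]
  push_cast
  exact Finset.sum_congr rfl fun j _ => by split_ifs <;> norm_num

lemma lrate_nonneg (hnonneg : ∀ x y, 0 ≤ c x y) (hα : ∀ x, 0 < α x)
    (v : Fin k → V) (i : Fin k) (y : V) : 0 ≤ lrate c α v i y := by
  apply mul_nonneg (hnonneg _ _)
  have := (hα y).le
  positivity

lemma labM_offdiag_fiber (κ : (Fin k → V) → ℝ) {v w : Fin k → V} (hvw : w ≠ v)
    (hfib : unlabel v = unlabel w) : labM c α κ v w = 0 := by
  unfold labM
  rw [if_neg hvw]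
  rw [if_neg hvw]
  rw [sub_zero]
  refine Finset.sum_eq_zero fun i _ => Finset.sum_eq_zero fun y _ => ?_
  have h0 : (if Function.update v i y = w then (1:ℝ) else 0) = 0 := by
    rw [if_neg]
    intro h
    by_cases hy : y = v i
    · rw [hy, Function.update_eq_self] at h
      exact hvw h.symm
    · have hmv : unlabel w = (unlabel v).move (v i) y := by
        rw [← h, unlabel_update hy]
      have hne : (unlabel v).move (v i) y ≠ unlabel v := by
        apply move_ne
        · have := unlabel_pos v i; omega
        · exact fun hh => hy hh.symm
      exact hne (by rw [← hmv]; exact hfib.symm)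
  rw [h0]
  ring

lemma labM_diag (hloop : ∀ x, c x x = 0) (κ : (Fin k → V) → ℝ) (w : Fin k → V) :
    labM c α κ w w = -(∑ i, ∑ y, lrate c α w i y) - κ w := by
  unfold labM
  have hterm : ∀ i y, lrate c α w i y * ((if Function.update w i y = w then (1:ℝ) else 0)
      - (if w = w then (1:ℝ) else 0)) = -lrate c α w i y := by
    intro i y
    rw [if_pos (rfl : w = w)]
    by_cases hy : y = w i
    · subst hy
      rw [if_pos (Function.update_eq_self i w), lrate, hloop]
      ring
    · have hupd : Function.update w i y ≠ w := by
        intro h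
        have h2 := congrFun h i
        rw [Function.update_self] at h2
        exact hy h2
      rw [if_neg hupd]
      ring
  have h2 : (∑ i, ∑ y, lrate c α w i y * ((if Function.update w i y = w then (1:ℝ) else 0)
      - (if w = w then (1:ℝ) else 0))) = ∑ i, ∑ y : V, -lrate c α w i y :=
    Finset.sum_congr rfl fun i _ => Finset.sum_congr rfl fun y _ => hterm i y
  rw [h2, if_pos (rfl : w = w)]
  simp [Finset.sum_neg_distrib]

/-- total lookdown jump rate equals total SIP jump rate -/
lemma sum_lrate (hsymm : ∀ x y, c x y = c y x) (hloop : ∀ x, c x x = 0) (w : Fin k → V) :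
    ∑ i, ∑ y, lrate c α w i y
      = ∑ x, ∑ y, c x y * ((unlabel w).1 x : ℝ) * (α y + (unlabel w).1 y) := by
  set η := unlabel w with hη
  have expand : ∀ i : Fin k, ∑ y, lrate c α w i y
      = (∑ y, c (w i) y * α y) + 2 * ∑ j, if j < i then c (w i) (w j) else 0 := by
    intro i
    have h1 : ∀ y, lrate c α w i y = c (w i) y * α y + 2 * (c (w i) y * (cnt w i y : ℝ)) := by
      intro y; rw [lrate]; ring
    rw [Finset.sum_congr rfl fun y _ => h1 y, Finset.sum_add_distrib, ← Finset.mul_sum]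
    congr 1
    congr 1
    have h2 : ∀ y, c (w i) y * (cnt w i y : ℝ)
        = ∑ j, if j < i ∧ w j = y then c (w i) y else 0 := by
      intro y
      rw [cnt_cast, Finset.mul_sum]
      exact Finset.sum_congr rfl fun j _ => by split_ifs <;> ring
    rw [Finset.sum_congr rfl fun y _ => h2 y, Finset.sum_comm]
    refine Finset.sum_congr rfl fun j _ => ?_
    by_cases hj : j < i
    · rw [if_pos hj]
      have : ∀ y, (if j < i ∧ w j = y then c (w i) y else 0)
          = if w j = y then c (w i) y else 0 := fun y => by simp [hj]
      rw [Finset.sum_congr rfl fun y _ => this y, Finset.sum_ite_eq]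
      simp
    · rw [if_neg hj]
      refine Finset.sum_eq_zero fun y _ => by simp [hj]
  rw [Finset.sum_congr rfl fun i _ => expand i, Finset.sum_add_distrib]
  have T1 : ∑ i : Fin k, ∑ y, c (w i) y * α y
      = ∑ x, ∑ y, c x y * (η.1 x : ℝ) * α y := by
    rw [sum_label w (fun x => ∑ y, c x y * α y)]
    refine Finset.sum_congr rfl fun x _ => ?_
    rw [Finset.mul_sum]
    exact Finset.sum_congr rfl fun y _ => by ring
  have swapT2 : ∑ i : Fin k, ∑ j, (if j < i then c (w i) (w j) else 0)
      = ∑ i : Fin k, ∑ j, (if i < j then c (w i) (w j) else 0) := by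
    rw [Finset.sum_comm]
    refine Finset.sum_congr rfl fun i _ => Finset.sum_congr rfl fun j _ => ?_
    split_ifs with h
    · exact hsymm _ _
    · rfl
  have T2 : 2 * ∑ i : Fin k, ∑ j, (if j < i then c (w i) (w j) else 0)
      = ∑ i : Fin k, ∑ j, c (w i) (w j) := by
    rw [two_mul]
    nth_rewrite 2 [swapT2]
    rw [← Finset.sum_add_distrib]
    refine Finset.sum_congr rfl fun i _ => ?_
    rw [← Finset.sum_add_distrib]
    refine Finset.sum_congr rfl fun j _ => ?_
    rcases lt_trichotomy i j with h | h | h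
    · rw [if_neg (asymm h), if_pos h, zero_add]
    · subst h
      rw [if_neg (lt_irrefl i), hloop]
      norm_num
    · rw [if_pos h, if_neg (asymm h), add_zero]
  have T3 : ∑ i : Fin k, ∑ j, c (w i) (w j)
      = ∑ x, ∑ y, c x y * (η.1 x : ℝ) * (η.1 y : ℝ) := by
    have h1 : ∀ i : Fin k, ∑ j, c (w i) (w j) = ∑ y, (η.1 y : ℝ) * c (w i) y := fun i =>
      sum_label w (fun y => c (w i) y)
    rw [Finset.sum_congr rfl fun i _ => h1 i, Finset.sum_comm]
    refine Finset.sum_congr rfl fun y _ => ?_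
    rw [show ∑ i : Fin k, (η.1 y : ℝ) * c (w i) y = (η.1 y : ℝ) * ∑ i : Fin k, c (w i) y from
      (Finset.mul_sum _ _ _).symm, sum_label w (fun x => c x y), Finset.mul_sum]
    refine Finset.sum_congr rfl fun x _ => ?_
    rw [← hsymm x y]
    ring
  rw [show (∑ i : Fin k, 2 * ∑ j, if j < i then c (w i) (w j) else 0)
      = 2 * ∑ i : Fin k, ∑ j, (if j < i then c (w i) (w j) else 0) from
    (Finset.mul_sum _ _ _).symm, T2, T1, T3, ← Finset.sum_add_distrib]
  refine Finset.sum_congr rfl fun x _ => ?_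
  rw [← Finset.sum_add_distrib]
  exact Finset.sum_congr rfl fun y _ => by ring


lemma sip_diag (hloop : ∀ x, c x x = 0) (η : Config V k) :
    sipMatrix c α k η η = -∑ x, ∑ y, c x y * (η.1 x : ℝ) * (α y + η.1 y) := by
  unfold sipMatrix
  have hterm : ∀ x y : V, c x y * (η.1 x : ℝ) * (α y + η.1 y) *
      ((if η.move x y = η then (1:ℝ) else 0) - (if η = η then (1:ℝ) else 0))
      = -(c x y * (η.1 x : ℝ) * (α y + η.1 y)) := by
    intro x y
    rw [if_pos (rfl : η = η)]
    by_cases hx : η.1 x = 0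
    · rw [hx]
      push_cast
      ring
    · by_cases hxy : x = y
      · subst hxy
        rw [hloop]
        ring
      · rw [if_neg (move_ne hx hxy)]
        ring
  rw [Finset.sum_congr rfl fun x _ => Finset.sum_congr rfl fun y _ => hterm x y]
  simp [Finset.sum_neg_distrib]

lemma sip_offdiag (hloop : ∀ x, c x x = 0) {η ζ : Config V k} (hne : ζ ≠ η) {x y : V}
    (hxy : x ≠ y) (hx : η.1 x ≠ 0) (hmv : η.move x y = ζ) :
    sipMatrix c α k η ζ = c x y * (η.1 x : ℝ) * (α y + η.1 y) := by
  unfold sipMatrix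
  rw [if_neg hne]
  have hz : ∀ x' y' : V, ¬(x' = x ∧ y' = y) →
      c x' y' * (η.1 x' : ℝ) * (α y' + η.1 y') *
        ((if η.move x' y' = ζ then (1:ℝ) else 0) - 0) = 0 := by
    intro x' y' hne'
    by_cases hx0 : η.1 x' = 0
    · rw [hx0]; push_cast; ring
    · by_cases hxy' : x' = y'
      · subst hxy'; rw [hloop]; ring
      · rw [if_neg, sub_zero, mul_zero]
        intro h
        have := move_unique hx0 hx hxy' hxy (h.trans hmv.symm)
        exact hne' this
  rw [Finset.sum_eq_single x]
  · rw [Finset.sum_eq_single y]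
    · rw [if_pos hmv]
      ring
    · intro y' _ hy'
      exact hz x y' (fun hh => hy' hh.2)
    · intro h; exact absurd (Finset.mem_univ y) h
  · intro x' _ hx'
    exact Finset.sum_eq_zero fun y' _ => hz x' y' (fun hh => hx' hh.1)
  · intro h; exact absurd (Finset.mem_univ x) h

lemma sip_offdiag_zero (hloop : ∀ x, c x x = 0) {η ζ : Config V k} (hne : ζ ≠ η)
    (hno : ¬ ∃ p : V × V, p.1 ≠ p.2 ∧ η.1 p.1 ≠ 0 ∧ η.move p.1 p.2 = ζ) :
    sipMatrix c α k η ζ = 0 := by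
  unfold sipMatrix
  rw [if_neg hne]
  refine Finset.sum_eq_zero fun x' _ => Finset.sum_eq_zero fun y' _ => ?_
  by_cases hx0 : η.1 x' = 0
  · rw [hx0]; push_cast; ring
  · by_cases hxy' : x' = y'
    · subst hxy'; rw [hloop]; ring
    · rw [if_neg, sub_zero, mul_zero]
      intro h
      exact hno ⟨(x', y'), hxy', hx0, h⟩

lemma killed_offdiag {η ζ : Config V k} (hne : ζ ≠ η) :
    killedMatrix c α ω k η ζ = sipMatrix c α k η ζ := by
  unfold killedMatrix
  rw [if_neg hne, sub_zero]

lemma killed_diag (hloop : ∀ x, c x x = 0) (η : Config V k) :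
    killedMatrix c α ω k η η
      = -(∑ x, ∑ y, c x y * (η.1 x : ℝ) * (α y + η.1 y)) - ∑ x, ω x * η.1 x := by
  unfold killedMatrix
  rw [if_pos (rfl : η = η), sip_diag hloop]


lemma labM_apply_ne (κ : (Fin k → V) → ℝ) {v w : Fin k → V} (hvw : w ≠ v) :
    labM c α κ v w
      = ∑ i, ∑ y, lrate c α v i y * (if Function.update v i y = w then 1 else 0) := by
  unfold labM
  rw [if_neg hvw]
  rw [if_neg hvw]
  rw [sub_zero]
  exact Finset.sum_congr rfl fun i _ => Finset.sum_congr rfl fun y _ => by rw [sub_zero]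

lemma update_inv {v w : Fin k → V} {i : Fin k} (h : Function.update v i (w i) = w) :
    Function.update w i (v i) = v := by
  funext j
  by_cases hj : j = i
  · subst hj
    rw [Function.update_self]
  · rw [Function.update_of_ne hj]
    have := congrFun h j
    rw [Function.update_of_ne hj] at this
    exact this.symm

/-- fiber sum in the off-diagonal case, positive subcase -/
lemma fiber_sum_offdiag (hsymm : ∀ x y, c x y = c y x) (hloop : ∀ x, c x x = 0)
    {η : Config V k} {w : Fin k → V} (hne : unlabel w ≠ η) {x y : V}
    (hxy : x ≠ y) (hx : η.1 x ≠ 0) (hmv : η.move x y = unlabel w) :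
    ∑ v ∈ Finset.univ.filter (fun v : Fin k → V => unlabel v = η),
        (∑ i, ∑ y', lrate c α v i y' * (if Function.update v i y' = w then 1 else 0))
      = c x y * (((unlabel w).1 y : ℝ)) * (α y + η.1 y) := by
  obtain ⟨ζ, hζ⟩ : ∃ ζ : Config V k, unlabel w = ζ := ⟨_, rfl⟩
  rw [hζ] at hne hmv ⊢
  have hζy : ζ.1 y = η.1 y + 1 := by
    rw [← hmv, move_apply hx, if_neg (Ne.symm hxy), if_pos rfl]
    have : (if y = x then 1 else 0) ≤ η.1 y := by rw [if_neg (Ne.symm hxy)]; omega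
    omega
  have hζwi : ∀ i, ζ.1 (w i) ≠ 0 := fun i => by
    rw [← hζ]
    have := unlabel_pos w i
    omega
  have hηζ : ζ.move y x = η := by rw [← hmv]; exact move_move hx hxy
  -- step 1: collapse inner y'-sum
  have step1 : ∀ v : Fin k → V, ∀ i : Fin k,
      (∑ y', lrate c α v i y' * (if Function.update v i y' = w then 1 else 0))
        = lrate c α v i (w i) * (if Function.update v i (w i) = w then 1 else 0) := by
    intro v i
    refine Finset.sum_eq_single (w i) (fun y' _ hy' => ?_) (fun h => absurd (Finset.mem_univ _) h)
    rw [if_neg, mul_zero]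
    intro h
    have := congrFun h i
    rw [Function.update_self] at this
    exact hy' this
  rw [Finset.sum_congr rfl fun v _ => Finset.sum_congr rfl fun i _ => step1 v i,
    Finset.sum_comm]
  -- step 2: reindex the v-sum by the vacated site
  have step2 : ∀ i : Fin k,
      (∑ v ∈ Finset.univ.filter (fun v : Fin k → V => unlabel v = η),
        lrate c α v i (w i) * (if Function.update v i (w i) = w then 1 else 0))
      = ∑ x' : V, (if unlabel (Function.update w i x') = η
          then lrate c α (Function.update w i x') i (w i) else 0) := by
    intro i
    have e1 : ∀ v ∈ Finset.univ.filter (fun v : Fin k → V => unlabel v = η),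
        lrate c α v i (w i) * (if Function.update v i (w i) = w then 1 else 0)
        = if Function.update v i (w i) = w then lrate c α v i (w i) else 0 := by
      intro v _
      split_ifs <;> ring
    rw [Finset.sum_congr rfl e1, ← Finset.sum_filter, Finset.filter_filter]
    rw [← Finset.sum_filter]
    refine Finset.sum_bij' (fun v _ => v i) (fun x' _ => Function.update w i x') ?_ ?_ ?_ ?_ ?_
    · rintro v hv
      obtain ⟨hfib, hupd⟩ := (Finset.mem_filter.mp hv).2
      refine Finset.mem_filter.mpr ⟨Finset.mem_univ _, ?_⟩
      rw [update_inv hupd]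
      exact hfib
    · rintro x' hx'
      have hfib := (Finset.mem_filter.mp hx').2
      refine Finset.mem_filter.mpr ⟨Finset.mem_univ _, hfib, ?_⟩
      rw [Function.update_idem, Function.update_eq_self]
    · rintro v hv
      obtain ⟨hfib, hupd⟩ := (Finset.mem_filter.mp hv).2
      exact update_inv hupd
    · rintro x' hx'
      rw [Function.update_self]
    · rintro v hv
      obtain ⟨hfib, hupd⟩ := (Finset.mem_filter.mp hv).2
      rw [update_inv hupd]
  rw [Finset.sum_congr rfl fun i _ => step2 i]
  -- step 3: identify the indicator
  have step3 : ∀ i : Fin k, ∀ x' : V,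
      (if unlabel (Function.update w i x') = η
          then lrate c α (Function.update w i x') i (w i) else 0)
      = if w i = y ∧ x' = x then c x y * (α y + 2 * (cnt w i y : ℝ)) else 0 := by
    intro i x'
    by_cases hcond : unlabel (Function.update w i x') = η
    · rw [if_pos hcond]
      by_cases hx'wi : x' = w i
      · exfalso
        rw [hx'wi, Function.update_eq_self, hζ] at hcond
        exact hne hcond
      · have hul : unlabel (Function.update w i x') = ζ.move (w i) x' := by
          rw [unlabel_update hx'wi, hζ]
        have heq : ζ.move (w i) x' = ζ.move y x := by
          rw [hηζ, ← hul, hcond]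
        have huni := move_unique (hζwi i) (by omega : ζ.1 y ≠ 0)
          (fun h => hx'wi h.symm) (Ne.symm hxy) heq
        rw [if_pos ⟨huni.1, huni.2⟩, lrate, Function.update_self, cnt_update, huni.1, huni.2]
    · rw [if_neg hcond, if_neg]
      rintro ⟨hwi, hx'x⟩
      apply hcond
      have hx'ne : x' ≠ w i := by rw [hwi, hx'x]; exact hxy
      rw [unlabel_update hx'ne, hζ, hwi, hx'x, hηζ]
  rw [Finset.sum_congr rfl fun i _ => Finset.sum_congr rfl fun x' _ => step3 i x']
  -- step 4: evaluate
  have step4 : ∀ i : Fin k,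
      (∑ x' : V, if w i = y ∧ x' = x then c x y * (α y + 2 * (cnt w i y : ℝ)) else 0)
      = if w i = y then c x y * (α y + 2 * (cnt w i y : ℝ)) else 0 := by
    intro i
    by_cases hwi : w i = y
    · rw [if_pos hwi]
      have : ∀ x' : V, (if w i = y ∧ x' = x then c x y * (α y + 2 * (cnt w i y : ℝ)) else 0)
          = if x' = x then c x y * (α y + 2 * (cnt w i y : ℝ)) else 0 := by
        intro x'; simp [hwi]
      rw [Finset.sum_congr rfl fun x' _ => this x', Finset.sum_ite_eq']
      simp
    · rw [if_neg hwi]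
      exact Finset.sum_eq_zero fun x' _ => by simp [hwi]
  rw [Finset.sum_congr rfl fun i _ => step4 i, ← Finset.sum_filter]
  -- step 5: the quadratic count
  set F := Finset.univ.filter (fun i : Fin k => w i = y) with hF
  have hFcard : F.card = ζ.1 y := by rw [← hζ]; rfl
  have hcntF : ∀ i ∈ F, (cnt w i y : ℝ) = ((F.filter fun j => j < i).card : ℝ) := by
    intro i _
    rw [cnt, hF]
    norm_cast
    congr 1
    ext j
    simp [Finset.mem_filter, and_comm, and_assoc]
  have hpcR : 2 * (∑ i ∈ F, ((F.filter fun j => j < i).card : ℝ)) + (F.card : ℝ)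
      = (F.card : ℝ) * (F.card : ℝ) := by exact_mod_cast sum_pairs_card F
  have hsum : ∑ i ∈ F, c x y * (α y + 2 * (cnt w i y : ℝ))
      = c x y * ((F.card : ℝ) * α y + ((F.card : ℝ) * F.card - F.card)) := by
    rw [← Finset.mul_sum]
    congr 1
    rw [Finset.sum_congr rfl (fun i hi => by rw [hcntF i hi]),
      Finset.sum_add_distrib, Finset.sum_const, nsmul_eq_mul, ← Finset.mul_sum]
    linarith [hpcR]
  rw [hsum, hFcard]
  rw [hζy]
  push_cast
  ring

/-- the scalar intertwining identity -/
lemma K1_scalar (hsymm : ∀ x y, c x y = c y x) (hloop : ∀ x, c x x = 0)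
    (η : Config V k) (w : Fin k → V) :
    (Nlab (unlabel w) : ℝ) *
        (∑ v ∈ Finset.univ.filter (fun v : Fin k → V => unlabel v = η),
          labM c α (fun u => ∑ i, ω (u i)) v w)
      = (Nlab η : ℝ) * killedMatrix c α ω k η (unlabel w) := by
  by_cases hdiag : unlabel w = η
  · rw [hdiag]
    congr 1
    rw [Finset.sum_eq_single_of_mem w (Finset.mem_filter.mpr ⟨Finset.mem_univ _, hdiag⟩)
      (fun v hv hvw => labM_offdiag_fiber _ (Ne.symm hvw)
        (by rw [(Finset.mem_filter.mp hv).2, hdiag]))]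
    rw [labM_diag hloop, sum_lrate hsymm hloop, killed_diag hloop, hdiag]
    congr 1
    rw [sum_label w (fun x => ω x), hdiag]
    exact Finset.sum_congr rfl fun x _ => by ring
  · have hwv : ∀ v ∈ Finset.univ.filter (fun v : Fin k → V => unlabel v = η), w ≠ v := by
      intro v hv h
      rw [h] at hdiag
      exact hdiag (Finset.mem_filter.mp hv).2
    rw [Finset.sum_congr rfl fun v hv => labM_apply_ne _ (hwv v hv)]
    by_cases hpair : ∃ p : V × V, p.1 ≠ p.2 ∧ η.1 p.1 ≠ 0 ∧ η.move p.1 p.2 = unlabel w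
    · obtain ⟨⟨x, y⟩, hxy, hx, hmv⟩ := hpair
      rw [fiber_sum_offdiag hsymm hloop hdiag hxy hx hmv, killed_offdiag hdiag,
        sip_offdiag hloop hdiag hxy hx hmv]
      have hr := Nlab_ratio hxy hx
      rw [hmv] at hr
      have hrR : (Nlab (unlabel w) : ℝ) * ((unlabel w).1 y : ℝ)
          = (Nlab η : ℝ) * (η.1 x : ℝ) := by exact_mod_cast hr
      linear_combination (c x y * (α y + (η.1 y : ℝ))) * hrR
    · rw [killed_offdiag hdiag, sip_offdiag_zero hloop hdiag hpair, mul_zero]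
      rw [Finset.sum_eq_zero, mul_zero]
      intro v hv
      have hfib := (Finset.mem_filter.mp hv).2
      refine Finset.sum_eq_zero fun i _ => Finset.sum_eq_zero fun y _ => ?_
      rw [if_neg, mul_zero]
      intro h
      by_cases hy : y = v i
      · rw [hy, Function.update_eq_self] at h
        rw [← h] at hdiag
        exact hdiag hfib
      · have : unlabel w = η.move (v i) y := by
          rw [← h, unlabel_update hy, hfib]
        refine hpair ⟨(v i, y), fun hh => hy hh.symm, ?_, this.symm⟩
        show η.1 (v i) ≠ 0
        rw [← hfib]
        have := unlabel_pos v i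
        omega


/-- the uniform-labeling kernel -/
def lamM (k : ℕ) : Matrix (Config V k) (Fin k → V) ℝ :=
  fun η v => if unlabel v = η then ((Nlab η : ℝ))⁻¹ else 0

lemma lamM_nonneg (η : Config V k) (v : Fin k → V) : 0 ≤ lamM k η v := by
  unfold lamM
  split_ifs
  · positivity
  · exact le_refl 0
lemma lamM_rowsum (η : Config V k) : ∑ v, lamM k η v = 1 := by
  unfold lamM
  rw [← Finset.sum_filter, Finset.sum_const, nsmul_eq_mul]
  rw [show (Finset.univ.filter fun v : Fin k → V => unlabel v = η).card = Nlab η from rfl]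
  rw [mul_inv_cancel₀]
  exact Nat.cast_ne_zero.mpr (Nlab_pos η).ne'

lemma lamM_mul_labM (hsymm : ∀ x y, c x y = c y x) (hloop : ∀ x, c x x = 0) :
    lamM (V := V) k * labM c α (fun u => ∑ i, ω (u i)) = killedMatrix c α ω k * lamM k := by
  ext η w
  erw [Matrix.mul_apply, Matrix.mul_apply]
  have hL : ∑ v, lamM k η v * labM c α (fun u => ∑ i, ω (u i)) v w
      = ((Nlab η : ℝ))⁻¹ * ∑ v ∈ Finset.univ.filter (fun v : Fin k → V => unlabel v = η),
          labM c α (fun u => ∑ i, ω (u i)) v w := by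
    calc ∑ v, lamM k η v * labM c α (fun u => ∑ i, ω (u i)) v w
        = ∑ v : Fin k → V, (if unlabel v = η
            then ((Nlab η : ℝ))⁻¹ * labM c α (fun u => ∑ i, ω (u i)) v w else 0) := by
          refine Finset.sum_congr rfl fun v _ => ?_
          unfold lamM
          split_ifs with h
          · rfl
          · rw [zero_mul]
      _ = ∑ v ∈ Finset.univ.filter (fun v : Fin k → V => unlabel v = η),
            ((Nlab η : ℝ))⁻¹ * labM c α (fun u => ∑ i, ω (u i)) v w :=
          (Finset.sum_filter _ _).symm
      _ = _ := (Finset.mul_sum _ _ _).symm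
  have hR : ∑ ζ, killedMatrix c α ω k η ζ * lamM k ζ w
      = killedMatrix c α ω k η (unlabel w) * ((Nlab (unlabel w) : ℝ))⁻¹ := by
    rw [Finset.sum_eq_single (unlabel w)
      (fun ζ _ hζ => by unfold lamM; rw [if_neg (fun h => hζ h.symm), mul_zero])
      (fun h => absurd (Finset.mem_univ _) h)]
    unfold lamM
    rw [if_pos rfl]
  rw [hL, hR]
  have key := K1_scalar (c := c) (α := α) (ω := ω) hsymm hloop η w
  have hNη : (Nlab η : ℝ) ≠ 0 := Nat.cast_ne_zero.mpr (Nlab_pos η).ne'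
  have hNζ : (Nlab (unlabel w) : ℝ) ≠ 0 := Nat.cast_ne_zero.mpr (Nlab_pos _).ne'
  field_simp
  linear_combination key


lemma stack_apply (a z : V) : (stackConfig V 1 a).1 z = if z = a then 1 else 0 := rfl

lemma stack_one (a : V) : (stackConfig V 1 a).1 a = 1 := by rw [stack_apply, if_pos rfl]

lemma move_stack {a y : V} (hya : y ≠ a) :
    (stackConfig V 1 a).move a y = stackConfig V 1 y := by
  have h1 : (stackConfig V 1 a).1 a ≠ 0 := by rw [stack_one]; omega
  apply Subtype.ext; funext z
  rw [move_apply h1, stack_apply, stack_apply]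
  by_cases hz : z = a
  · subst hz
    rw [if_pos rfl]
    split_ifs <;> norm_num
  · rw [if_neg hz]
    split_ifs <;> norm_num

lemma cnt_zero [NeZero k] (v : Fin k → V) (y : V) : cnt v 0 y = 0 := by
  rw [cnt, Finset.card_eq_zero]
  apply Finset.filter_eq_empty_iff.mpr
  intro j _
  rintro ⟨hj, -⟩
  have : (j : ℕ) < 0 := hj
  omega

/-- the projection onto the lowest particle -/
def projM (k : ℕ) [NeZero k] : Matrix (Fin k → V) (Config V 1) ℝ :=
  fun v ξ => if stackConfig V 1 (v 0) = ξ then 1 else 0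

lemma projM_rowsum [NeZero k] (v : Fin k → V) : ∑ ξ, projM k v ξ = 1 := by
  unfold projM
  rw [Finset.sum_ite_eq]
  simp

lemma labM_mul_projM [NeZero k] (hloop : ∀ x, c x x = 0) :
    labM c α (fun v : Fin k → V => ω (v 0)) * projM k = projM k * killedMatrix c α ω 1 := by
  ext v ξ
  erw [Matrix.mul_apply, Matrix.mul_apply]
  have hR : ∑ ξ', projM (V := V) k v ξ' * killedMatrix c α ω 1 ξ' ξ
      = killedMatrix c α ω 1 (stackConfig V 1 (v 0)) ξ := by
    rw [Finset.sum_eq_single (stackConfig V 1 (v 0))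
      (fun ξ' _ hξ' => by unfold projM; rw [if_neg (fun h => hξ' h.symm), zero_mul])
      (fun h => absurd (Finset.mem_univ _) h)]
    unfold projM
    rw [if_pos rfl, one_mul]
  rw [hR]
  have hL : ∑ w, labM c α (fun v : Fin k → V => ω (v 0)) v w * projM k w ξ
      = (∑ i, ∑ y, lrate c α v i y *
          ((if stackConfig V 1 (Function.update v i y 0) = ξ then 1 else 0)
            - (if stackConfig V 1 (v 0) = ξ then 1 else 0)))
        - ω (v 0) * (if stackConfig V 1 (v 0) = ξ then 1 else 0) := by
    unfold labM projM
    rw [Finset.sum_congr rfl fun w _ => sub_mul _ _ _, Finset.sum_sub_distrib]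
    congr 1
    · rw [Finset.sum_congr rfl fun w _ => Finset.sum_mul _ _ _, Finset.sum_comm]
      refine Finset.sum_congr rfl fun i _ => ?_
      rw [Finset.sum_congr rfl fun w _ => Finset.sum_mul _ _ _, Finset.sum_comm]
      refine Finset.sum_congr rfl fun y _ => ?_
      rw [Finset.sum_congr rfl fun w _ => (by ring :
        lrate c α v i y * ((if Function.update v i y = w then (1:ℝ) else 0)
            - (if w = v then 1 else 0)) * (if stackConfig V 1 (w 0) = ξ then 1 else 0)
          = lrate c α v i y * ((if Function.update v i y = w then (1:ℝ) else 0)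
              * (if stackConfig V 1 (w 0) = ξ then 1 else 0))
            - lrate c α v i y * ((if w = v then (1:ℝ) else 0)
              * (if stackConfig V 1 (w 0) = ξ then 1 else 0))), Finset.sum_sub_distrib]
      rw [mul_sub]
      congr 1
      · rw [← Finset.mul_sum]
        congr 1
        rw [Finset.sum_eq_single (Function.update v i y)
          (fun w _ hw => by rw [if_neg (fun h => hw h.symm), zero_mul])
          (fun h => absurd (Finset.mem_univ _) h), if_pos rfl, one_mul]
      · rw [← Finset.mul_sum]
        congr 1
        rw [Finset.sum_eq_single v
          (fun w _ hw => by rw [if_neg hw, zero_mul])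
          (fun h => absurd (Finset.mem_univ _) h), if_pos rfl, one_mul]
    · rw [Finset.sum_eq_single v
        (fun w _ hw => by rw [if_neg hw, zero_mul])
        (fun h => absurd (Finset.mem_univ _) h), if_pos rfl]
  rw [hL]
  -- only the i = 0 term survives on the left
  have hzero : ∀ i : Fin k, i ≠ 0 → (∑ y, lrate c α v i y *
      ((if stackConfig V 1 (Function.update v i y 0) = ξ then (1:ℝ) else 0)
        - (if stackConfig V 1 (v 0) = ξ then 1 else 0))) = 0 := by
    intro i hi
    refine Finset.sum_eq_zero fun y _ => ?_
    rw [Function.update_of_ne (Ne.symm hi), sub_self, mul_zero]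
  rw [Finset.sum_eq_single (0 : Fin k) (fun i _ hi => hzero i hi)
    (fun h => absurd (Finset.mem_univ _) h)]
  unfold killedMatrix sipMatrix
  have hstacksum : ∀ x : V, x ≠ v 0 → (∑ y, c x y * (((stackConfig V 1 (v 0)).1 x : ℕ) : ℝ)
      * (α y + ((stackConfig V 1 (v 0)).1 y : ℕ))
      * ((if (stackConfig V 1 (v 0)).move x y = ξ then 1 else 0)
        - (if ξ = stackConfig V 1 (v 0) then 1 else 0))) = 0 := by
    intro x hx
    refine Finset.sum_eq_zero fun y _ => ?_
    simp [stack_apply, hx]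
  rw [Finset.sum_eq_single (v 0) (fun x _ hx => hstacksum x hx)
    (fun h => absurd (Finset.mem_univ _) h)]
  have hkill : (if ξ = stackConfig V 1 (v 0)
      then ∑ x, ω x * (((stackConfig V 1 (v 0)).1 x : ℕ) : ℝ) else 0)
      = ω (v 0) * (if stackConfig V 1 (v 0) = ξ then 1 else 0) := by
    have hs : (∑ x, ω x * (((stackConfig V 1 (v 0)).1 x : ℕ) : ℝ)) = ω (v 0) := by
      rw [Finset.sum_congr rfl fun x _ => (by rw [stack_apply]; split_ifs <;> simp :
        ω x * (((stackConfig V 1 (v 0)).1 x : ℕ) : ℝ) = if x = v 0 then ω x else 0),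
        Finset.sum_ite_eq']
      simp
    rw [hs]
    by_cases h : ξ = stackConfig V 1 (v 0)
    · rw [if_pos h, if_pos h.symm]
      ring
    · rw [if_neg h, if_neg (fun hh => h hh.symm)]
      ring
  rw [hkill]
  congr 1
  refine Finset.sum_congr rfl fun y _ => ?_
  rw [Function.update_self, lrate, cnt_zero]
  by_cases hy : y = v 0
  · subst hy
    rw [hloop]
    ring
  · rw [move_stack hy, stack_one, stack_apply, if_neg hy]
    have hite : (if ξ = stackConfig V 1 (v 0) then (1:ℝ) else 0)
        = (if stackConfig V 1 (v 0) = ξ then (1:ℝ) else 0) := by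
      by_cases h : ξ = stackConfig V 1 (v 0)
      · rw [if_pos h, if_pos h.symm]
      · rw [if_neg h, if_neg (fun hh => h hh.symm)]
    rw [hite]
    push_cast
    ring


section ExpTools
variable {n m : Type*} [Fintype n] [DecidableEq n] [Fintype m] [DecidableEq m]

attribute [local instance] Matrix.linftyOpNormedRing Matrix.linftyOpNormedAlgebra

lemma entryCLM_exists (i j : n) : ∃ L : Matrix n n ℝ →L[ℝ] ℝ, ∀ A, L A = A i j :=
  ⟨⟨⟨⟨fun A : Matrix n n ℝ => A i j, fun a b => rfl⟩, fun r a => rfl⟩,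
    (continuous_apply j).comp (continuous_apply i)⟩, fun _ => rfl⟩

lemma exp_entry_hasSum (M : Matrix n n ℝ) (i j : n) :
    HasSum (fun p : ℕ => ((p.factorial : ℝ)⁻¹ • M ^ p) i j) (exp M i j) := by
  obtain ⟨L, hL⟩ := entryCLM_exists i j
  have hs : Summable fun p : ℕ => ((p.factorial : ℝ)⁻¹ : ℝ) • M ^ p :=
    expSeries_summable' (𝕂 := ℝ) M
  have h2 := hs.hasSum.mapL L
  have key : exp M = ∑' p : ℕ, ((p.factorial : ℝ)⁻¹ : ℝ) • M ^ p := by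
    rw [exp_eq_tsum ℝ]
  rw [key]
  simpa [hL] using h2

lemma pow_entry_nonneg {M : Matrix n n ℝ} (hM : ∀ i j, 0 ≤ M i j) (p : ℕ) :
    ∀ i j, 0 ≤ (M ^ p) i j := by
  induction p with
  | zero => intro i j; rcases eq_or_ne i j with h | h <;> simp [Matrix.one_apply, h]
  | succ p ih =>
      intro i j
      rw [pow_succ, Matrix.mul_apply]
      exact Finset.sum_nonneg fun x _ => mul_nonneg (ih i x) (hM x j)

lemma pow_entry_mono {M N : Matrix n n ℝ} (hM : ∀ i j, 0 ≤ M i j)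
    (hMN : ∀ i j, M i j ≤ N i j) (p : ℕ) : ∀ i j, (M ^ p) i j ≤ (N ^ p) i j := by
  induction p with
  | zero => intro i j; simp
  | succ p ih =>
      intro i j
      rw [pow_succ, pow_succ, Matrix.mul_apply, Matrix.mul_apply]
      refine Finset.sum_le_sum fun x _ => ?_
      have h1 : 0 ≤ (M ^ p) i x := pow_entry_nonneg hM p i x
      calc (M ^ p) i x * M x j ≤ (M ^ p) i x * N x j :=
            mul_le_mul_of_nonneg_left (hMN x j) h1
        _ ≤ (N ^ p) i x * N x j :=
            mul_le_mul_of_nonneg_right (ih i x) ((hM x j).trans (hMN x j))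

lemma exp_entry_nonneg {M : Matrix n n ℝ} (hM : ∀ i j, 0 ≤ M i j) (i j : n) :
    0 ≤ exp M i j := by
  rw [← (exp_entry_hasSum M i j).tsum_eq]
  refine tsum_nonneg fun p => ?_
  simp only [Matrix.smul_apply, smul_eq_mul]
  exact mul_nonneg (by positivity) (pow_entry_nonneg hM p i j)

lemma exp_entry_mono_of_nonneg {M N : Matrix n n ℝ} (hM : ∀ i j, 0 ≤ M i j)
    (hMN : ∀ i j, M i j ≤ N i j) (i j : n) : exp M i j ≤ exp N i j := by
  rw [← (exp_entry_hasSum M i j).tsum_eq, ← (exp_entry_hasSum N i j).tsum_eq]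
  refine Summable.tsum_le_tsum (fun p => ?_) (exp_entry_hasSum M i j).summable
    (exp_entry_hasSum N i j).summable
  simp only [Matrix.smul_apply, smul_eq_mul]
  exact mul_le_mul_of_nonneg_left (pow_entry_mono hM hMN p i j) (by positivity)

lemma exp_add_smul_one (r : ℝ) (M : Matrix n n ℝ) :
    exp (M + r • (1 : Matrix n n ℝ)) = Real.exp r • exp M := by
  have h1 : exp (r • (1 : Matrix n n ℝ)) = Real.exp r • (1 : Matrix n n ℝ) := by
    have h : (r • (1 : Matrix n n ℝ)) = algebraMap ℝ (Matrix n n ℝ) r := by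
      rw [Algebra.algebraMap_eq_smul_one]
    rw [h]
    erw [← algebraMap_exp_comm]
    rw [Algebra.algebraMap_eq_smul_one, ← Real.exp_eq_exp_ℝ]
  rw [Matrix.exp_add_of_commute (A := M) (B := r • (1 : Matrix n n ℝ)) ((Commute.one_right M).smul_right r), h1,
    Matrix.mul_smul, mul_one]

lemma exp_sub_smul_one (r : ℝ) (M : Matrix n n ℝ) :
    exp M = Real.exp (-r) • exp (M + r • (1 : Matrix n n ℝ)) := by
  rw [exp_add_smul_one, smul_smul, ← Real.exp_add, neg_add_cancel, Real.exp_zero, one_smul]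

/-- Intertwining passes to exponentials. -/
lemma intertwine_exp (Λ : Matrix m n ℝ) (A : Matrix m m ℝ) (B : Matrix n n ℝ)
    (h : Λ * B = A * Λ) : Λ * exp B = exp A * Λ := by
  have hpow : ∀ p : ℕ, Λ * B ^ p = A ^ p * Λ := by
    intro p
    induction p with
    | zero => simp
    | succ p ih => rw [pow_succ, pow_succ, ← Matrix.mul_assoc, ih, Matrix.mul_assoc, h,
        ← Matrix.mul_assoc]
  have hsB : Summable fun p : ℕ => ((p.factorial : ℝ)⁻¹ : ℝ) • B ^ p :=
    expSeries_summable' (𝕂 := ℝ) B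
  have hsA : Summable fun p : ℕ => ((p.factorial : ℝ)⁻¹ : ℝ) • A ^ p :=
    expSeries_summable' (𝕂 := ℝ) A
  have hLlin : ∃ L : Matrix n n ℝ →L[ℝ] Matrix m n ℝ, ∀ X, L X = Λ * X := by
    refine ⟨⟨⟨⟨fun X => Λ * X, fun a b => Matrix.mul_add Λ a b⟩,
      fun r a => (Matrix.mul_smul Λ r a)⟩, ?_⟩, fun _ => rfl⟩
    exact LinearMap.continuous_of_finiteDimensional _
  have hRlin : ∃ L : Matrix m m ℝ →L[ℝ] Matrix m n ℝ, ∀ X, L X = X * Λ := by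
    refine ⟨⟨⟨⟨fun X => X * Λ, fun a b => Matrix.add_mul a b Λ⟩,
      fun r a => (Matrix.smul_mul r a Λ)⟩, ?_⟩, fun _ => rfl⟩
    exact LinearMap.continuous_of_finiteDimensional _
  obtain ⟨L1, hL1⟩ := hLlin
  obtain ⟨L2, hL2⟩ := hRlin
  have e1 := (hsB.hasSum.mapL L1).tsum_eq
  have e2 := (hsA.hasSum.mapL L2).tsum_eq
  have keyB : exp B = ∑' p : ℕ, ((p.factorial : ℝ)⁻¹ : ℝ) • B ^ p := by rw [exp_eq_tsum ℝ]
  have keyA : exp A = ∑' p : ℕ, ((p.factorial : ℝ)⁻¹ : ℝ) • A ^ p := by rw [exp_eq_tsum ℝ]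
  rw [keyB, keyA, ← hL1 (∑' p : ℕ, ((p.factorial : ℝ)⁻¹ : ℝ) • B ^ p),
    ← hL2 (∑' p : ℕ, ((p.factorial : ℝ)⁻¹ : ℝ) • A ^ p), ← e1, ← e2]
  congr 1
  funext p
  simp only [hL1, hL2, Matrix.mul_smul, Matrix.smul_mul, hpow p]


/-- entrywise monotonicity of matrix exponential for sub-Markov-type comparisons -/
lemma exp_mono_offdiag [Nonempty n] {A B : Matrix n n ℝ}
    (hoff : ∀ i j, i ≠ j → 0 ≤ A i j) (hAB : ∀ i j, A i j ≤ B i j) :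
    (∀ i j, 0 ≤ exp A i j) ∧ (∀ i j, exp A i j ≤ exp B i j) := by
  set r := max 0 (Finset.univ.sup' Finset.univ_nonempty fun i => -(A i i)) with hrdef
  have hr : ∀ i, -(A i i) ≤ r := fun i =>
    le_max_of_le_right (Finset.le_sup' (f := fun i => -(A i i)) (Finset.mem_univ i))
  have hA' : ∀ i j, 0 ≤ (A + r • (1 : Matrix n n ℝ)) i j := by
    intro i j
    rw [Matrix.add_apply, Matrix.smul_apply, Matrix.one_apply]
    by_cases hij : i = j
    · subst hij
      rw [if_pos rfl, smul_eq_mul, mul_one]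
      have := hr i
      linarith
    · rw [if_neg hij, smul_eq_mul, mul_zero, add_zero]
      exact hoff i j hij
  have hAB' : ∀ i j, (A + r • (1 : Matrix n n ℝ)) i j ≤ (B + r • (1 : Matrix n n ℝ)) i j := by
    intro i j
    rw [Matrix.add_apply, Matrix.add_apply]
    exact add_le_add_left (hAB i j) _
  have he : (0:ℝ) < Real.exp (-r) := Real.exp_pos _
  constructor
  · intro i j
    rw [exp_sub_smul_one r A, Matrix.smul_apply, smul_eq_mul]
    exact mul_nonneg he.le (exp_entry_nonneg hA' i j)
  · intro i j
    rw [exp_sub_smul_one r A, exp_sub_smul_one r B, Matrix.smul_apply, Matrix.smul_apply,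
      smul_eq_mul, smul_eq_mul]
    exact mul_le_mul_of_nonneg_left
      (exp_entry_mono_of_nonneg hA' hAB' i j) he.le

end ExpTools

lemma labM_offdiag_nonneg (hnonneg : ∀ x y, 0 ≤ c x y) (hα : ∀ x, 0 < α x)
    (κ : (Fin k → V) → ℝ) {v w : Fin k → V} (hvw : w ≠ v) : 0 ≤ labM c α κ v w := by
  rw [labM_apply_ne κ hvw]
  refine Finset.sum_nonneg fun i _ => Finset.sum_nonneg fun y _ => ?_
  apply mul_nonneg (lrate_nonneg hnonneg hα v i y)
  split_ifs <;> norm_num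

lemma labM_le {κ κ' : (Fin k → V) → ℝ} (h : ∀ v, κ' v ≤ κ v) (v w : Fin k → V) :
    labM c α κ v w ≤ labM c α κ' v w := by
  unfold labM
  apply sub_le_sub_left
  split_ifs
  · exact h v
  · exact le_refl 0

end SIPaux
end

theorem killed_survival_domination
    {V : Type*} [Fintype V] [DecidableEq V] [Nonempty V] (c : V → V → ℝ) (α ω : V → ℝ)
    (hsymm : ∀ x y, c x y = c y x) (hnonneg : ∀ x y, 0 ≤ c x y)
    (hloop : ∀ x, c x x = 0) (hconn : (graphOf c).Connected)
    (hα : ∀ x, 0 < α x) (hω0 : ∀ x, 0 ≤ ω x)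
    (k : ℕ) (hk : 2 ≤ k) (t : ℝ) (ht : 0 ≤ t) (η : Config V k) :
    (NormedSpace.exp (t • killedMatrix c α ω k)).mulVec (fun _ => 1) η ≤
      ⨆ x : V,
        (NormedSpace.exp (t • killedMatrix c α ω 1)).mulVec (fun _ => 1)
          (stackConfig V 1 x) := by
  classical
  haveI : NeZero k := ⟨by omega⟩
  set Qk := killedMatrix c α ω k with hQk
  set Q1 := killedMatrix c α ω 1 with hQ1
  set Lab := SIPaux.labM c α (fun u : Fin k → V => ∑ i, ω (u i)) with hLab
  set Lab0 := SIPaux.labM c α (fun u : Fin k → V => ω (u 0)) with hLab0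
  have hint1 : SIPaux.lamM (V := V) k * (t • Lab) = (t • Qk) * SIPaux.lamM k := by
    rw [Matrix.mul_smul]
    erw [Matrix.smul_mul]
    erw [hLab, hQk, SIPaux.lamM_mul_labM hsymm hloop]
    rfl
  have hint2 : SIPaux.projM (V := V) k * (t • Q1) = (t • Lab0) * SIPaux.projM k := by
    rw [Matrix.mul_smul]
    erw [Matrix.smul_mul]
    erw [hLab0, hQ1, SIPaux.labM_mul_projM hloop]
    rfl
  have E1 := SIPaux.intertwine_exp _ _ _ hint1
  have E2 := SIPaux.intertwine_exp _ _ _ hint2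
  set u : (Fin k → V) → ℝ := (NormedSpace.exp (t • Lab)).mulVec (fun _ => 1) with hu
  set u0 : (Fin k → V) → ℝ := (NormedSpace.exp (t • Lab0)).mulVec (fun _ => 1) with hu0
  set s : Config V 1 → ℝ := (NormedSpace.exp (t • Q1)).mulVec (fun _ => 1) with hs
  -- row sums of the kernels
  have hlam1 : (SIPaux.lamM (V := V) k).mulVec (fun _ => (1:ℝ)) = fun _ => (1:ℝ) := by
    funext η'
    show ∑ v, SIPaux.lamM (V := V) k η' v * 1 = 1
    rw [Finset.sum_congr rfl fun v _ => mul_one _]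
    exact SIPaux.lamM_rowsum η'
  have hproj1 : (SIPaux.projM (V := V) k).mulVec (fun _ => (1:ℝ)) = fun _ => (1:ℝ) := by
    funext v'
    show ∑ ξ, SIPaux.projM (V := V) k v' ξ * 1 = 1
    rw [Finset.sum_congr rfl fun ξ _ => mul_one _]
    exact SIPaux.projM_rowsum v'
  -- step 1 : the k-particle survival is the λ-average of the labeled survival
  have step1 : (NormedSpace.exp (t • Qk)).mulVec (fun _ => 1)
      = (SIPaux.lamM (V := V) k).mulVec u := by
    rw [hu, Matrix.mulVec_mulVec, E1, ← Matrix.mulVec_mulVec, hlam1]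
  -- step 2 : labeled survival dominated by reduced-killing survival
  have hcomp := SIPaux.exp_mono_offdiag (A := t • Lab) (B := t • Lab0)
    (fun v w hvw => by
      rw [Matrix.smul_apply, smul_eq_mul]
      exact mul_nonneg ht (SIPaux.labM_offdiag_nonneg hnonneg hα _ (Ne.symm hvw)))
    (fun v w => by
      rw [Matrix.smul_apply, Matrix.smul_apply, smul_eq_mul, smul_eq_mul]
      refine mul_le_mul_of_nonneg_left (SIPaux.labM_le (fun v' => ?_) v w) ht
      exact Finset.single_le_sum (f := fun i => ω (v' i)) (fun i _ => hω0 (v' i))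
        (Finset.mem_univ 0))
  have hu_le : ∀ v, u v ≤ u0 v := by
    intro v
    show ∑ w, NormedSpace.exp (t • Lab) v w * 1 ≤ ∑ w, NormedSpace.exp (t • Lab0) v w * 1
    refine Finset.sum_le_sum fun w _ => ?_
    rw [mul_one, mul_one]
    exact hcomp.2 v w
  -- step 3 : reduced-killing survival is the single-particle survival
  have hu0s : ∀ v : Fin k → V, u0 v = s (stackConfig V 1 (v 0)) := by
    intro v
    have h2 : u0 = (SIPaux.projM (V := V) k).mulVec s := by
      rw [hu0, ← hproj1, Matrix.mulVec_mulVec, ← E2, ← Matrix.mulVec_mulVec, hs]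
    rw [h2]
    show ∑ ξ, SIPaux.projM (V := V) k v ξ * s ξ = _
    rw [Finset.sum_eq_single (stackConfig V 1 (v 0))
      (fun ξ _ hξ => by rw [show SIPaux.projM (V := V) k v ξ = 0 from if_neg
        (fun h => hξ h.symm), zero_mul])
      (fun h => absurd (Finset.mem_univ _) h)]
    rw [show SIPaux.projM (V := V) k v (stackConfig V 1 (v 0)) = 1 from if_pos rfl, one_mul]
  have hsM : ∀ a : V, s (stackConfig V 1 a) ≤ ⨆ x : V, s (stackConfig V 1 x) := fun a =>
    le_ciSup ((Set.finite_range fun x : V => s (stackConfig V 1 x)).bddAbove) a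
  calc (NormedSpace.exp (t • Qk)).mulVec (fun _ => 1) η
      = ∑ v, SIPaux.lamM (V := V) k η v * u v := by rw [step1]; rfl
    _ ≤ ∑ v, SIPaux.lamM (V := V) k η v * (⨆ x : V, s (stackConfig V 1 x)) := by
        refine Finset.sum_le_sum fun v _ => ?_
        refine mul_le_mul_of_nonneg_left ?_ (SIPaux.lamM_nonneg η v)
        exact le_trans (hu_le v) (le_trans (le_of_eq (hu0s v)) (hsM (v 0)))
    _ = ⨆ x : V, s (stackConfig V 1 x) := by
        rw [← Finset.sum_mul, SIPaux.lamM_rowsum, one_mul]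
end

section
/- Let G = (V,(c_{xy})) be a finite weighted graph, α positive site weights, ω nonnegative killing rates, and k ≥ 2. Define the lookdown generator on ℝ^{V^k} by 𝓛_{G,α,ω,k} φ(x₁,…,x_k) = Σ_{i=1}^k Σ_{x,y∈V} c_{xy} 1{x = x_i} (α_y + 2·Σ_{j=1}^{i−1} 1{y = x_j}) (φ(x^{i→y}) − φ(x)) − φ(x)·Σ_{i=1}^k ω_{x_i}, where x^{i→y} replaces the i-th coordinate of x = (x₁,…,x_k) by y. Let Φ_k(x) = Σ_{i=1}^k δ_{x_i} ∈ Ξ_k and let S_k φ(x) = (1/k!) Σ_{σ∈Sym(k)} φ(x_{σ(1)},…,x_{σ(k)}) be the symmetrization operator. Then for every f : Ξ_k → ℝ, S_k( 𝓛_{G,α,ω,k}(f ∘ Φ_k) ) = (L_{G,α,ω,k} f) ∘ Φ_k. -/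
open scoped BigOperators Classical

/-!
Relabelling the levels does not change `unlabel w`, and a lookdown jump of level `i` from
`w i = x` to `y` moves one particle of `unlabel w` from `x` to `y`. Hence the lookdown generator
at `w` is the SIP generator in which the interaction rate `η x * η y` is replaced by twice the
number of pairs of levels `j < i` with `w i = x`, `w j = y`. Precomposing with `Fin.rev` turns
these pairs into the pairs with `i < j`, so summing over `Sym(k)` replaces twice this count by
`k! * η x * η y` when `x ≠ y`; when `x = y` the jump does not change the configuration.
-/

open Finset

namespace Config

variable {V : Type*} [Fintype V] {k : ℕ}

@[ext]
lemma ext {η ζ : Config V k} (h : ∀ z, η.1 z = ζ.1 z) : η = ζ :=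
  Subtype.ext (funext h)

variable [DecidableEq V]

lemma move_of_eq_zero {η : Config V k} {x : V} (hx : η.1 x = 0) (y : V) : η.move x y = η :=
  dif_pos hx

lemma move_apply {η : Config V k} {x : V} (hx : η.1 x ≠ 0) (y z : V) :
    (η.move x y).1 z = η.1 z - (if z = x then 1 else 0) + (if z = y then 1 else 0) := by
  simp only [move, hx, ↓reduceDIte]

lemma move_self (η : Config V k) (x : V) : η.move x x = η := by
  by_cases hx : η.1 x = 0
  · exact move_of_eq_zero hx x
  · ext z
    rw [move_apply hx]
    by_cases hz : z = x
    · subst hz; simp only [if_true]; omega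
    · simp [hz]

end Config

section Unlabel

variable {V : Type*} [Fintype V] [DecidableEq V] {k : ℕ}

lemma unlabel_apply (w : Fin k → V) (z : V) :
    (unlabel w).1 z = #{i | w i = z} := rfl

lemma unlabel_comp_perm (w : Fin k → V) (σ : Equiv.Perm (Fin k)) :
    unlabel (fun i => w (σ i)) = unlabel w := by
  ext z
  simp only [unlabel_apply, card_filter]
  exact Equiv.sum_comp σ fun i => if w i = z then 1 else 0

lemma unlabel_update (w : Fin k → V) (i : Fin k) (y : V) :
    unlabel (Function.update w i y) = (unlabel w).move (w i) y := by
  have hpos : (unlabel w).1 (w i) ≠ 0 := by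
    rw [unlabel_apply]; exact card_ne_zero_of_mem (a := i) (by simp)
  ext z
  rw [Config.move_apply hpos]
  simp only [unlabel_apply, card_filter]
  have hupd : (fun j => if Function.update w i y j = z then 1 else 0)
      = Function.update (fun j => if w j = z then 1 else 0) i (if y = z then 1 else 0) :=
    Function.comp_update w i y (f := fun u => if u = z then 1 else 0)
  rw [hupd, sum_update_of_mem (mem_univ i), sum_eq_add_sum_sdiff_singleton_of_mem (mem_univ i)]
  simp only [eq_comm (a := z)]
  split_ifs <;> omega

lemma sum_comp_eq_sum_mul_unlabel (w : Fin k → V) (g : V → ℝ) :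
    ∑ i, g (w i) = ∑ x, g x * (unlabel w).1 x := by
  rw [← sum_fiberwise univ w]
  refine sum_congr rfl fun x _ => ?_
  rw [sum_congr rfl fun i hi => by rw [(mem_filter.1 hi).2], sum_const, nsmul_eq_mul,
    mul_comm, unlabel_apply]

end Unlabel

section Lookdown

variable {V : Type*} [DecidableEq V] {k : ℕ}

def lookdownPairs (w : Fin k → V) (x y : V) : Finset (Fin k × Fin k) :=
  {p | p.2 < p.1 ∧ w p.1 = x ∧ w p.2 = y}

lemma card_lookdownPairs_comp_rev (w : Fin k → V) (x y : V) :
    #(lookdownPairs (fun i => w i.rev) x y)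
      = #{p : Fin k × Fin k | p.1 < p.2 ∧ w p.1 = x ∧ w p.2 = y} := by
  refine card_nbij' (fun p => (p.1.rev, p.2.rev)) (fun p => (p.1.rev, p.2.rev)) ?_ ?_ ?_ ?_ <;>
    simp [lookdownPairs, Set.MapsTo, Set.LeftInvOn, Fin.rev_lt_rev]

variable [Fintype V]

lemma sum_lookdownRate (w : Fin k → V) (x y : V) (a : ℝ) :
    ∑ i : Fin k, (if x = w i then 1 else 0) *
        (a + 2 * ∑ j : Fin k, (if (j : ℕ) < (i : ℕ) ∧ w j = y then 1 else 0))
      = a * (unlabel w).1 x + 2 * #(lookdownPairs w x y) := by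
  have hsite : ∑ i : Fin k, (if x = w i then 1 else 0 : ℝ) = (unlabel w).1 x := by
    simp [sum_boole, unlabel_apply, eq_comm]
  have hpairs : ∑ i : Fin k, (if x = w i then 1 else 0 : ℝ) *
      ∑ j : Fin k, (if (j : ℕ) < (i : ℕ) ∧ w j = y then 1 else 0)
        = #(lookdownPairs w x y) := by
    rw [lookdownPairs, card_filter, Nat.cast_sum, ← univ_product_univ, sum_product]
    refine sum_congr rfl fun i _ => ?_
    rw [mul_sum]
    refine sum_congr rfl fun j _ => ?_
    rcases eq_or_ne (w i) x with hi | hi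
    · simp [hi, eq_comm]
    · simp [hi, hi.symm]
  simp only [mul_add, sum_add_distrib, ← sum_mul, hsite, mul_left_comm _ (2 : ℝ), ← mul_sum,
    hpairs]
  ring

lemma card_lookdownPairs_add_card_comp_rev (w : Fin k → V) {x y : V} (hxy : x ≠ y) :
    #(lookdownPairs w x y) + #(lookdownPairs (fun i => w i.rev) x y)
      = (unlabel w).1 x * (unlabel w).1 y := by
  rw [card_lookdownPairs_comp_rev, lookdownPairs, ← card_union_of_disjoint, unlabel_apply,
    unlabel_apply, ← card_product]
  · congr 1
    ext ⟨i, j⟩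
    simp only [mem_union, mem_filter, mem_univ, true_and, mem_product]
    constructor
    · rintro (⟨-, hi, hj⟩ | ⟨-, hi, hj⟩) <;> exact ⟨hi, hj⟩
    · rintro ⟨hi, hj⟩
      have hij : i ≠ j := by rintro rfl; exact hxy (hi.symm.trans hj)
      rcases hij.lt_or_gt with h | h
      · exact Or.inr ⟨h, hi, hj⟩
      · exact Or.inl ⟨h, hi, hj⟩
  · rw [disjoint_filter]
    exact fun p _ h₁ h₂ => lt_asymm h₁.1 h₂.1

lemma two_mul_sum_perm_card_lookdownPairs (w : Fin k → V) {x y : V} (hxy : x ≠ y) :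
    2 * ∑ σ : Equiv.Perm (Fin k), #(lookdownPairs (fun i => w (σ i)) x y)
      = Nat.factorial k * ((unlabel w).1 x * (unlabel w).1 y) := by
  have hrev := Equiv.sum_comp (Equiv.mulRight (Fin.revPerm (n := k)))
    fun σ : Equiv.Perm (Fin k) => #(lookdownPairs (fun i => w (σ i)) x y)
  simp only [Equiv.coe_mulRight, Equiv.Perm.mul_apply, Fin.revPerm_apply] at hrev
  rw [two_mul]
  nth_rw 2 [← hrev]
  rw [← sum_add_distrib, sum_congr rfl fun σ _ => by
    rw [card_lookdownPairs_add_card_comp_rev (fun i => w (σ i)) hxy, unlabel_comp_perm]]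
  rw [sum_const, card_univ, Fintype.card_perm, Fintype.card_fin, smul_eq_mul]

end Lookdown

section Representation

variable {V : Type*} [Fintype V] [DecidableEq V] {k : ℕ}

lemma lookdownGen_comp_unlabel (c : V → V → ℝ) (α ω : V → ℝ) (f : Config V k → ℝ)
    (w : Fin k → V) :
    lookdownGen c α ω k (fun u => f (unlabel u)) w
      = (∑ x, ∑ y, c x y * (α y * (unlabel w).1 x + 2 * #(lookdownPairs w x y)) *
          (f ((unlabel w).move x y) - f (unlabel w)))
        - f (unlabel w) * ∑ x, ω x * (unlabel w).1 x := by
  rw [lookdownGen, sum_comp_eq_sum_mul_unlabel w ω, sum_comm]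
  congr 1
  refine sum_congr rfl fun x _ => ?_
  rw [sum_comm]
  refine sum_congr rfl fun y _ => ?_
  rw [← sum_lookdownRate, mul_sum, sum_mul]
  refine sum_congr rfl fun i _ => ?_
  by_cases hx : x = w i
  · rw [hx, unlabel_update]
    ring
  · simp [hx]

lemma sum_perm_lookdownRate (v : Fin k → V) {x y : V} (hxy : x ≠ y) (a : ℝ) :
    ∑ σ : Equiv.Perm (Fin k), (a * (unlabel v).1 x + 2 * #(lookdownPairs (fun i => v (σ i)) x y))
      = Nat.factorial k * ((unlabel v).1 x * (a + (unlabel v).1 y)) := by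
  have hpairs := congrArg (Nat.cast (R := ℝ)) (two_mul_sum_perm_card_lookdownPairs v hxy)
  push_cast at hpairs
  rw [sum_add_distrib, sum_const, ← mul_sum, hpairs, card_univ, Fintype.card_perm,
    Fintype.card_fin, nsmul_eq_mul]
  ring

lemma sum_perm_lookdownGen_comp_unlabel (c : V → V → ℝ) (α ω : V → ℝ) (f : Config V k → ℝ)
    (v : Fin k → V) :
    ∑ σ : Equiv.Perm (Fin k), lookdownGen c α ω k (fun u => f (unlabel u)) (fun i => v (σ i))
      = Nat.factorial k * killedGen c α ω f (unlabel v) := by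
  simp only [lookdownGen_comp_unlabel, unlabel_comp_perm]
  set η := unlabel v
  have hsite : ∀ x y, ∑ σ : Equiv.Perm (Fin k), c x y *
        (α y * η.1 x + 2 * #(lookdownPairs (fun i => v (σ i)) x y)) * (f (η.move x y) - f η)
      = Nat.factorial k * (c x y * η.1 x * (α y + η.1 y) * (f (η.move x y) - f η)) := by
    intro x y
    by_cases hxy : x = y
    · simp [hxy, Config.move_self]
    · rw [← sum_mul, ← mul_sum, sum_perm_lookdownRate v hxy]
      ring
  rw [sum_sub_distrib, sum_comm, sum_congr rfl fun x _ => sum_comm]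
  simp only [hsite, sum_const, card_univ, Fintype.card_perm, Fintype.card_fin, nsmul_eq_mul]
  rw [killedGen, sipGen, mul_sub, mul_sum]
  simp only [mul_sum]

end Representation

theorem lookdown_representation_general
    {V : Type*} [Fintype V] [DecidableEq V] (c : V → V → ℝ) (α ω : V → ℝ)
    (k : ℕ) (f : Config V k → ℝ) (v : Fin k → V) :
    symmetrize k (lookdownGen c α ω k (fun u => f (unlabel u))) v
      = killedGen c α ω f (unlabel v) := by
  rw [symmetrize, sum_perm_lookdownGen_comp_unlabel, one_div,
    inv_mul_cancel_left₀ (Nat.cast_ne_zero.2 k.factorial_ne_zero)]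

theorem lookdown_representation
    {V : Type*} [Fintype V] [DecidableEq V] (c : V → V → ℝ) (α ω : V → ℝ)
    (hsymm : ∀ x y, c x y = c y x) (hnonneg : ∀ x y, 0 ≤ c x y)
    (hloop : ∀ x, c x x = 0)
    (hα : ∀ x, 0 < α x) (hω0 : ∀ x, 0 ≤ ω x)
    (k : ℕ) (hk : 2 ≤ k) (f : Config V k → ℝ) (v : Fin k → V) :
    symmetrize k (lookdownGen c α ω k (fun u => f (unlabel u))) v
      = killedGen c α ω f (unlabel v) :=
  lookdown_representation_general c α ω k f v
end
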